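/- Let X be an integrable real random variable whose cumulative distribution function F is continuous and strictly increasing, with quantile function F^{-1}. Let g : [0,1] -> [0,1] be a continuously differentiable increasing function with g(0) = 0 and g(1) = 1, and assume the integral from 0 to 1 of |F^{-1}(p)| * g'(1-p) dp is finite. Then the distortion risk measure equals the weighted risk measure with weight w(x) = g'(1 - F(x)): namely, the integral from 0 to 1 of F^{-1}(p) * g'(1-p) dp equals E[ X * g'(1 - F(X)) ] / E[ g'(1 - F(X)) ], and moreover E[ g'(1 - F(X)) ] = 1. -/

import Mathlib

/-! The quantile function `Q = F⁻¹` of any distribution function satisfies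
`Q p ≤ x ↔ p ≤ F x` on `(0, 1)`, so it pushes the uniform distribution on `(0, 1)` forward to
the law of `X`. When `F` is continuous, moreover `F (Q p) = p`, hence
`E[φ(X) w(F X)] = ∫₀¹ φ(Q p) w(p) dp`. With `φ = 1` and `w(p) = g'(1 - p)` this gives
`E[g'(1 - F X)] = g 1 - g 0 = 1`, and with `φ = id` the numerator is the distortion risk
measure. -/

open MeasureTheory Set Filter Topology

-- Only meaningful for `p ∈ (0, 1)`: elsewhere the set may be empty or unbounded below,
-- and `sInf` returns the junk value `0`.
noncomputable def quantile (F : ℝ → ℝ) (p : ℝ) : ℝ := sInf {x | p ≤ F x}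

namespace ProbabilityTheory

variable (μ : Measure ℝ)

theorem quantile_cdf_le_iff {p : ℝ} (hp : p ∈ Ioo 0 1) (x : ℝ) :
    quantile (cdf μ) p ≤ x ↔ p ≤ cdf μ x := by
  obtain ⟨a, ha⟩ := ((tendsto_cdf_atBot μ).eventually (eventually_lt_nhds hp.1)).exists
  obtain ⟨b, hb⟩ := ((tendsto_cdf_atTop μ).eventually (eventually_gt_nhds hp.2)).exists
  have hbdd : BddBelow {y | p ≤ cdf μ y} := ⟨a, fun y hy =>
    le_of_lt (lt_of_not_ge fun hya => (hy.trans (monotone_cdf μ hya)).not_gt ha)⟩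
  refine ⟨fun hx => ?_, fun hx => csInf_le hbdd hx⟩
  refine le_trans ?_ (monotone_cdf μ hx)
  -- `{y | p ≤ cdf μ y}` is an up-set, so right-continuity puts its infimum in it.
  refine ge_of_tendsto (x := 𝓝[>] _) ((cdf μ).right_continuous _ |>.mono Ioi_subset_Ici_self)
    (eventually_nhdsWithin_of_forall fun y hy => ?_)
  obtain ⟨s, hs, hsy⟩ := exists_lt_of_csInf_lt ⟨b, hb.le⟩ hy
  exact hs.trans (monotone_cdf μ hsy.le)

theorem monotoneOn_quantile_cdf : MonotoneOn (quantile (cdf μ)) (Ioo 0 1) :=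
  fun _ hp _ hq hpq => (quantile_cdf_le_iff μ hp _).2 <|
    hpq.trans ((quantile_cdf_le_iff μ hq _).1 le_rfl)

theorem aemeasurable_quantile_cdf :
    AEMeasurable (quantile (cdf μ)) (volume.restrict (Ioo 0 1)) :=
  aemeasurable_restrict_of_monotoneOn measurableSet_Ioo (monotoneOn_quantile_cdf μ)

theorem cdf_quantile_cdf (hcont : Continuous (cdf μ)) {p : ℝ} (hp : p ∈ Ioo 0 1) :
    cdf μ (quantile (cdf μ) p) = p := by
  refine le_antisymm ?_ ((quantile_cdf_le_iff μ hp _).1 le_rfl)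
  -- `cdf μ y < p` for every `y < quantile (cdf μ) p`; let `y` increase to the quantile.
  refine le_of_tendsto (x := 𝓝[<] quantile (cdf μ) p)
    ((hcont.tendsto _).mono_left nhdsWithin_le_nhds)
    (eventually_nhdsWithin_of_forall fun y hy => ?_)
  exact (lt_of_not_ge ((quantile_cdf_le_iff μ hp y).not.1 (not_le.2 hy))).le

theorem map_quantile_cdf_volume_Ioo [IsProbabilityMeasure μ] :
    (volume.restrict (Ioo (0 : ℝ) 1)).map (quantile (cdf μ)) = μ := by
  refine Measure.ext_of_Iic _ _ fun x => ?_
  have hpre : quantile (cdf μ) ⁻¹' Iic x ∩ Ioo 0 1 = Ioo 0 1 ∩ Iic (cdf μ x) := by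
    ext p
    simp only [mem_inter_iff, mem_preimage, mem_Iic]
    exact ⟨fun ⟨hx, hp⟩ => ⟨hp, (quantile_cdf_le_iff μ hp x).1 hx⟩,
      fun ⟨hp, hx⟩ => ⟨(quantile_cdf_le_iff μ hp x).2 hx, hp⟩⟩
  rw [Measure.map_apply_of_aemeasurable (aemeasurable_quantile_cdf μ) measurableSet_Iic,
    Measure.restrict_apply' measurableSet_Ioo, hpre,
    measure_congr ((Ioo_ae_eq_Ioc (μ := volume) (a := (0 : ℝ)) (b := 1)).inter
      (ae_eq_refl (Iic (cdf μ x)))),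
    Ioc_inter_Iic, Real.volume_Ioc, inf_eq_right.2 (cdf_le_one μ x), sub_zero, ofReal_cdf]

theorem integral_comp_cdf_eq_intervalIntegral_quantile [IsProbabilityMeasure μ]
    (hcont : Continuous (cdf μ)) (f : ℝ → ℝ → ℝ)
    (hf : AEStronglyMeasurable (fun x => f x (cdf μ x)) μ) :
    ∫ x, f x (cdf μ x) ∂μ = ∫ p in (0 : ℝ)..1, f (quantile (cdf μ) p) p := by
  calc ∫ x, f x (cdf μ x) ∂μ
      = ∫ x, f x (cdf μ x) ∂(volume.restrict (Ioo 0 1)).map (quantile (cdf μ)) := by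
        rw [map_quantile_cdf_volume_Ioo]
    _ = ∫ p in Ioo 0 1, f (quantile (cdf μ) p) (cdf μ (quantile (cdf μ) p)) := by
        rw [integral_map (aemeasurable_quantile_cdf μ) (by rwa [map_quantile_cdf_volume_Ioo])]
    _ = ∫ p in (0 : ℝ)..1, f (quantile (cdf μ) p) p := by
        rw [intervalIntegral.integral_of_le zero_le_one, integral_Ioc_eq_integral_Ioo]
        exact setIntegral_congr_fun measurableSet_Ioo fun p hp => by
          rw [cdf_quantile_cdf μ hcont hp]

end ProbabilityTheory

theorem intervalIntegral_comp_one_sub_eq_sub {g g' : ℝ → ℝ}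
    (hg : ∀ p ∈ Icc (0 : ℝ) 1, HasDerivAt g (g' p) p) (hg' : ContinuousOn g' (Icc 0 1)) :
    ∫ p in (0 : ℝ)..1, g' (1 - p) = g 1 - g 0 := by
  rw [intervalIntegral.integral_comp_sub_left, sub_zero, sub_self]
  refine intervalIntegral.integral_eq_sub_of_hasDerivAt (fun p hp => hg p ?_)
    (hg'.intervalIntegrable_of_Icc zero_le_one)
  rwa [uIcc_of_le zero_le_one] at hp

theorem distortion_eq_weighted_risk_measure_general
    {Ω : Type*} [MeasurableSpace Ω] (ℙ : Measure Ω) [IsProbabilityMeasure ℙ]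
    (X : Ω → ℝ) (hX : Measurable X)
    (F : ℝ → ℝ) (hF : ∀ x, F x = (ℙ {ω | X ω ≤ x}).toReal)
    (hFcont : Continuous F)
    (Finv : ℝ → ℝ) (hFinv : ∀ p : ℝ, Finv p = sInf {x : ℝ | p ≤ F x})
    (g g' : ℝ → ℝ)
    (hg : ∀ p ∈ Set.Icc (0 : ℝ) 1, HasDerivAt g (g' p) p)
    (hg'cont : ContinuousOn g' (Set.Icc (0 : ℝ) 1))
    (hg0 : g 0 = 0) (hg1 : g 1 = 1) :
    (∫ p in (0 : ℝ)..1, Finv p * g' (1 - p)) =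
        (∫ ω, X ω * g' (1 - F (X ω)) ∂ℙ) / (∫ ω, g' (1 - F (X ω)) ∂ℙ) ∧
      (∫ ω, g' (1 - F (X ω)) ∂ℙ) = 1 := by
  have : IsProbabilityMeasure (ℙ.map X) := Measure.isProbabilityMeasure_map hX.aemeasurable
  have hFμ : F = ProbabilityTheory.cdf (ℙ.map X) := funext fun x => by
    rw [hF, ProbabilityTheory.cdf_eq_real, measureReal_def, Measure.map_apply hX measurableSet_Iic]
    rfl
  have hFinvF : Finv = quantile F := funext hFinv
  have htransfer (f : ℝ → ℝ → ℝ) (hf : Continuous fun x => f x (F x)) :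
      ∫ ω, f (X ω) (F (X ω)) ∂ℙ = ∫ p in (0 : ℝ)..1, f (Finv p) p := by
    subst hFμ hFinvF
    rw [← integral_map hX.aemeasurable hf.aestronglyMeasurable]
    exact ProbabilityTheory.integral_comp_cdf_eq_intervalIntegral_quantile _ hFcont f
      hf.aestronglyMeasurable
  have hw : Continuous fun x => g' (1 - F x) :=
    hg'cont.comp_continuous (continuous_const.sub hFcont) fun x => by
      have := hFμ ▸ ProbabilityTheory.cdf_le_one (ℙ.map X) x
      have := hFμ ▸ ProbabilityTheory.cdf_nonneg (ℙ.map X) x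
      constructor <;> linarith
  have hden : ∫ ω, g' (1 - F (X ω)) ∂ℙ = 1 := by
    rw [htransfer (fun _ p => g' (1 - p)) hw, intervalIntegral_comp_one_sub_eq_sub hg hg'cont,
      hg1, hg0, sub_zero]
  refine ⟨?_, hden⟩
  rw [hden, div_one, htransfer (fun x p => x * g' (1 - p)) (continuous_id.mul hw)]

/-- **Distortion risk measures are weighted risk measures.** For `X` with continuous strictly
increasing cdf `F` and a continuously differentiable distortion function `g`, the distortion
risk measure `∫₀¹ F⁻¹(p) g'(1-p) dp` equals the weighted risk measure
`E[X g'(1-F(X))] / E[g'(1-F(X))]`, and moreover `E[g'(1-F(X))] = 1`. -/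
theorem distortion_eq_weighted_risk_measure
    {Ω : Type*} [MeasurableSpace Ω] (ℙ : Measure Ω) [IsProbabilityMeasure ℙ]
    (X : Ω → ℝ) (hX : Measurable X) (hXint : Integrable X ℙ)
    (F : ℝ → ℝ) (hF : ∀ x, F x = (ℙ {ω | X ω ≤ x}).toReal)
    (hFcont : Continuous F) (hFmono : StrictMono F)
    (Finv : ℝ → ℝ) (hFinv : ∀ p : ℝ, Finv p = sInf {x : ℝ | p ≤ F x})
    (g g' : ℝ → ℝ)
    (hg : ∀ p ∈ Set.Icc (0 : ℝ) 1, HasDerivAt g (g' p) p)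
    (hg'cont : ContinuousOn g' (Set.Icc (0 : ℝ) 1))
    (hgmono : MonotoneOn g (Set.Icc (0 : ℝ) 1))
    (hg0 : g 0 = 0) (hg1 : g 1 = 1)
    (hint : IntervalIntegrable (fun p => |Finv p| * g' (1 - p)) volume 0 1) :
    (∫ p in (0 : ℝ)..1, Finv p * g' (1 - p)) =
        (∫ ω, X ω * g' (1 - F (X ω)) ∂ℙ) / (∫ ω, g' (1 - F (X ω)) ∂ℙ) ∧
      (∫ ω, g' (1 - F (X ω)) ∂ℙ) = 1 :=
  distortion_eq_weighted_risk_measure_general ℙ X hX F hF hFcont Finv hFinv g g' hg hg'cont hg0 hg1
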